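/- arXiv:2009.01514 — 3 statements merged into one kernel-verified Lean document; each statement's English description precedes it below -/
import Mathlib

section
/- For every f ∈ H and every λ > 0: ‖L^{1/2} (P f − f)‖ ≤ λ^{1/2} · Q_λ · ‖f‖. (In the kernel-interpolation interpretation this bounds the L²_ρ-norm error ‖f_D − f*‖_ρ of interpolating a native-space target f* = f by λ^{1/2} Q_λ ‖f*‖.) -/
/-!
`P` is the orthogonal projection onto the range of `S*`, so `g := P f - f` lies in
`ker S ⊆ ker T` and `‖g‖ ≤ ‖f‖`. On `ker T` the operator `T + λ` acts as `λ`, whence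
`‖(T + λ)^{1/2} g‖ = λ^{1/2} ‖g‖`. Since `L ≤ L + λ`,
`‖L^{1/2} g‖ ≤ ‖(L + λ)^{1/2} g‖ = ‖[(L + λ)^{1/2} (T + λ)^{-1/2}] (T + λ)^{1/2} g‖`,
and the bracket is the adjoint of the operator whose norm is `Q_λ`.
-/

open ContinuousLinearMap

/-- The fractional power `A ^ s` of a (positive) operator, defined via the continuous
functional calculus applied to the real function `x ↦ x ^ s`. -/
noncomputable def opow {H : Type*} [NormedAddCommGroup H] [InnerProductSpace ℂ H]
    [CompleteSpace H] (A : H →L[ℂ] H) (s : ℝ) : H →L[ℂ] H :=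
  cfc (fun x : ℝ => x ^ s) A

section Interpolation

variable {𝕜 E F : Type*} [RCLike 𝕜] [NormedAddCommGroup E] [InnerProductSpace 𝕜 E]
  [CompleteSpace E] [NormedAddCommGroup F] [InnerProductSpace 𝕜 F] [CompleteSpace F]

lemma IsStarProjection.norm_apply_sub_self_le {p : E →L[𝕜] E} (hp : IsStarProjection p)
    (x : E) : ‖p x - x‖ ≤ ‖x‖ := by
  rw [← norm_neg, neg_sub]
  exact (1 - p).le_of_opNorm_le hp.one_sub.norm_le x |>.trans_eq (one_mul _)

lemma comp_adjoint_comp_inverse_comp {S : E →L[𝕜] F} (hS : IsUnit (S ∘L adjoint S)) :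
    S ∘L (adjoint S ∘L Ring.inverse (S ∘L adjoint S) ∘L S) = S := by
  rw [← comp_assoc, ← comp_assoc]
  exact congr($(Ring.mul_inverse_cancel _ hS) ∘L S)

lemma isStarProjection_adjoint_comp_inverse_comp {S : E →L[𝕜] F}
    (hS : IsUnit (S ∘L adjoint S)) :
    IsStarProjection (adjoint S ∘L Ring.inverse (S ∘L adjoint S) ∘L S) where
  isIdempotentElem := by
    change (_ ∘L _) ∘L (_ ∘L _) = _
    rw [comp_assoc, comp_assoc, comp_adjoint_comp_inverse_comp hS]
  isSelfAdjoint := (isPositive_self_comp_adjoint S).isSelfAdjoint.ringInverse.adjoint_conj S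

end Interpolation

section FractionalPower

variable {H : Type*} [NormedAddCommGroup H] [InnerProductSpace ℂ H] [CompleteSpace H]

lemma isSelfAdjoint_opow (A : H →L[ℂ] H) (s : ℝ) : IsSelfAdjoint (opow A s) :=
  cfc_predicate _ _

lemma opow_zero {A : H →L[ℂ] H} (hA : IsSelfAdjoint A) : opow A 0 = 1 := by
  simp only [opow, Real.rpow_zero]
  exact cfc_const_one ℝ A

lemma opow_one {A : H →L[ℂ] H} (hA : IsSelfAdjoint A) : opow A 1 = A := by
  simp only [opow, Real.rpow_one]
  exact cfc_id' ℝ A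

lemma opow_add {A : H →L[ℂ] H} (hA : ∀ x ∈ spectrum ℝ A, 0 < x) (s t : ℝ) :
    opow A (s + t) = opow A s * opow A t := by
  rw [opow, opow, opow, ← cfc_mul _ _ A
    (fun x hx ↦ (Real.continuousAt_rpow_const x s (.inl (hA x hx).ne')).continuousWithinAt)
    (fun x hx ↦ (Real.continuousAt_rpow_const x t (.inl (hA x hx).ne')).continuousWithinAt)]
  exact cfc_congr fun x hx ↦ Real.rpow_add (hA x hx) s t

lemma opow_add_of_nonneg {A : H →L[ℂ] H} (hA : ∀ x ∈ spectrum ℝ A, 0 ≤ x) {s t : ℝ}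
    (hs : 0 ≤ s) (ht : 0 ≤ t) (hst : s + t ≠ 0) :
    opow A (s + t) = opow A s * opow A t := by
  rw [opow, opow, opow, ← cfc_mul _ _ A
    (fun x _ ↦ (Real.continuousAt_rpow_const x s (.inr hs)).continuousWithinAt)
    (fun x _ ↦ (Real.continuousAt_rpow_const x t (.inr ht)).continuousWithinAt)]
  exact cfc_congr fun x hx ↦ Real.rpow_add' (hA x hx) hst

lemma ContinuousLinearMap.IsPositive.opow_half_mul_self {A : H →L[ℂ] H} (hA : A.IsPositive) :
    opow A (1 / 2) * opow A (1 / 2) = A := by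
  have hspec : ∀ x ∈ spectrum ℝ A, 0 ≤ x :=
    fun _ hx ↦ spectrum_nonneg_of_nonneg ((nonneg_iff_isPositive A).mpr hA) hx
  rw [← opow_add_of_nonneg hspec (by norm_num) (by norm_num) (by norm_num)]
  norm_num [opow_one hA.isSelfAdjoint]

lemma ContinuousLinearMap.IsPositive.norm_opow_half_apply_sq {A : H →L[ℂ] H}
    (hA : A.IsPositive) (x : H) : ‖opow A (1 / 2) x‖ ^ 2 = RCLike.re (inner ℂ (A x) x) := by
  rw [apply_norm_sq_eq_inner_adjoint_left, (isSelfAdjoint_opow A _).adjoint_eq]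
  exact congr(RCLike.re (inner ℂ ($(hA.opow_half_mul_self) x) x))

lemma ContinuousLinearMap.IsPositive.norm_opow_half_apply_le {A B : H →L[ℂ] H}
    (hA : A.IsPositive) (hB : B.IsPositive) (hAB : A ≤ B) (x : H) :
    ‖opow A (1 / 2) x‖ ≤ ‖opow B (1 / 2) x‖ := by
  refine (pow_le_pow_iff_left₀ (norm_nonneg _) (norm_nonneg _) two_ne_zero).mp ?_
  rw [hA.norm_opow_half_apply_sq, hB.norm_opow_half_apply_sq]
  simpa [sub_apply, inner_sub_left] using ((le_def A B).mp hAB).re_inner_nonneg_left x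

lemma norm_opow_apply_le_norm_comp_mul {A : H →L[ℂ] H} (hA : IsStrictlyPositive A)
    (B : H →L[ℂ] H) (s t : ℝ) (x : H) :
    ‖opow B t x‖ ≤ ‖opow A (-s) ∘L opow B t‖ * ‖opow A s x‖ := by
  have hinv : opow A (-s) * opow A s = 1 := by
    rw [← opow_add (fun _ ↦ hA.spectrum_pos), neg_add_cancel, opow_zero hA.isSelfAdjoint]
  have hswap : ‖opow B t * opow A (-s)‖ = ‖opow A (-s) * opow B t‖ := by
    rw [← norm_star, star_mul, (isSelfAdjoint_opow A _).star_eq, (isSelfAdjoint_opow B _).star_eq]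
  calc ‖opow B t x‖ = ‖(opow B t * opow A (-s)) (opow A s x)‖ := by
        rw [← mul_apply_eq_comp, mul_assoc, hinv, mul_one]
    _ ≤ _ := hswap ▸ le_opNorm _ _

lemma ContinuousLinearMap.IsPositive.norm_opow_half_add_smul_one_apply
    {T : H →L[ℂ] H} (hT : T.IsPositive) {lam : ℝ} (hlam : 0 ≤ lam) {x : H} (hx : T x = 0) :
    ‖opow (T + (lam : ℂ) • (1 : H →L[ℂ] H)) (1 / 2) x‖ = lam ^ ((1 : ℝ) / 2) * ‖x‖ := by
  have hpos : (T + (lam : ℂ) • (1 : H →L[ℂ] H)).IsPositive :=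
    hT.add (isPositive_one.smul_of_nonneg (Complex.zero_le_real.mpr hlam))
  have hre :
      RCLike.re (inner ℂ ((T + (lam : ℂ) • (1 : H →L[ℂ] H)) x) x) = lam * ‖x‖ ^ 2 := by
    simp [hx, inner_self_eq_norm_sq_to_K, ← Complex.ofReal_pow]
  rw [← Real.sqrt_sq (norm_nonneg (_ : H)), hpos.norm_opow_half_apply_sq, hre,
    Real.sqrt_mul hlam, Real.sqrt_sq (norm_nonneg x), Real.sqrt_eq_rpow]

open scoped ComplexOrder in
lemma ContinuousLinearMap.IsPositive.norm_opow_half_apply_le_of_apply_eq_zero {L T : H →L[ℂ] H}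
    (hL : L.IsPositive) (hT : T.IsPositive) {lam : ℝ} (hlam : 0 < lam) {x : H} (hx : T x = 0) :
    ‖opow L (1 / 2) x‖ ≤ lam ^ ((1 : ℝ) / 2) *
      ‖opow (T + (lam : ℂ) • (1 : H →L[ℂ] H)) (-(1 / 2)) ∘L
        opow (L + (lam : ℂ) • (1 : H →L[ℂ] H)) (1 / 2)‖ * ‖x‖ := by
  have hshift : IsStrictlyPositive ((lam : ℂ) • (1 : H →L[ℂ] H)) :=
    isStrictlyPositive_one.smul (Complex.zero_lt_real.mpr hlam)
  have hT' : IsStrictlyPositive (T + (lam : ℂ) • (1 : H →L[ℂ] H)) :=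
    hshift.nonneg_add ((nonneg_iff_isPositive T).mpr hT)
  calc ‖opow L (1 / 2) x‖ ≤ ‖opow (L + (lam : ℂ) • (1 : H →L[ℂ] H)) (1 / 2) x‖ :=
        hL.norm_opow_half_apply_le (hL.add ((nonneg_iff_isPositive _).mp hshift.nonneg))
          (le_add_of_nonneg_right hshift.nonneg) x
    _ ≤ _ * ‖opow (T + (lam : ℂ) • (1 : H →L[ℂ] H)) (1 / 2) x‖ :=
        norm_opow_apply_le_norm_comp_mul hT' _ _ _ x
    _ = _ := by rw [hT.norm_opow_half_add_smul_one_apply hlam.le hx]; ring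

end FractionalPower

theorem native_space_interpolation_error_bound_general
    {H : Type*} [NormedAddCommGroup H] [InnerProductSpace ℂ H] [CompleteSpace H]
    {m : ℕ}
    (S : H →L[ℂ] EuclideanSpace ℂ (Fin m))
    (hinv : IsUnit (S ∘L ContinuousLinearMap.adjoint S))
    (L : H →L[ℂ] H) (hL : L.IsPositive)
    (f : H) (lam : ℝ) (hlam : 0 < lam) :
    letI T : H →L[ℂ] H := ContinuousLinearMap.adjoint S ∘L S
    letI P : H →L[ℂ] H :=
      (ContinuousLinearMap.adjoint S) ∘L
        (Ring.inverse (S ∘L ContinuousLinearMap.adjoint S)) ∘L S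
    letI Q : ℝ := ‖opow (T + (lam : ℂ) • (1 : H →L[ℂ] H)) (-(1 / 2)) ∘L
        opow (L + (lam : ℂ) • (1 : H →L[ℂ] H)) (1 / 2)‖
    ‖(opow L (1 / 2)) (P f - f)‖ ≤ lam ^ ((1 : ℝ) / 2) * Q * ‖f‖ := by
  set P := adjoint S ∘L Ring.inverse (S ∘L adjoint S) ∘L S
  have hSP : S (P f) = S f := congr($(comp_adjoint_comp_inverse_comp hinv) f)
  have hker : (adjoint S ∘L S) (P f - f) = 0 := by
    rw [comp_apply, map_sub, hSP, sub_self, map_zero]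
  calc ‖opow L (1 / 2) (P f - f)‖ ≤ lam ^ ((1 : ℝ) / 2) * _ * ‖P f - f‖ :=
        hL.norm_opow_half_apply_le_of_apply_eq_zero (isPositive_adjoint_comp_self S) hlam hker
    _ ≤ _ := by
        gcongr
        exact (isStarProjection_adjoint_comp_inverse_comp hinv).norm_apply_sub_self_le f

/-- For every `f ∈ H` and every `λ > 0`:
`‖L^{1/2} (P f − f)‖ ≤ λ^{1/2} · Q_λ · ‖f‖`, where
`Q_λ := ‖(T + λI)^{−1/2} (L + λI)^{1/2}‖`, `T = S* S` and `P = S* (S S*)⁻¹ S`. -/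
theorem native_space_interpolation_error_bound
    {H : Type*} [NormedAddCommGroup H] [InnerProductSpace ℂ H] [CompleteSpace H]
    {m : ℕ} (hm : 0 < m)
    (S : H →L[ℂ] EuclideanSpace ℂ (Fin m))
    (hinv : IsUnit (S ∘L ContinuousLinearMap.adjoint S))
    (L : H →L[ℂ] H) (hL : L.IsPositive)
    (f : H) (lam : ℝ) (hlam : 0 < lam) :
    letI T : H →L[ℂ] H := ContinuousLinearMap.adjoint S ∘L S
    letI P : H →L[ℂ] H :=
      (ContinuousLinearMap.adjoint S) ∘L
        (Ring.inverse (S ∘L ContinuousLinearMap.adjoint S)) ∘L S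
    letI Q : ℝ := ‖opow (T + (lam : ℂ) • (1 : H →L[ℂ] H)) (-(1 / 2)) ∘L
        opow (L + (lam : ℂ) • (1 : H →L[ℂ] H)) (1 / 2)‖
    ‖(opow L (1 / 2)) (P f - f)‖ ≤ lam ^ ((1 : ℝ) / 2) * Q * ‖f‖ :=
  native_space_interpolation_error_bound_general S hinv L hL f lam hlam
end

section
/- Let 0 ≤ r < 1/2, let h ∈ 𝓔, set f* := 𝓛^r h, let v ∈ ℂ^m, and define f_λ := (L + λI)⁻¹ ι* f* and f_{D,λ} := (T + λI)⁻¹ S* v for λ > 0. Then for every λ > 0: ‖ι (f_λ − f_{D,λ})‖_𝓔 ≤ λ^{r−1/2} Q_λ² W_λ ‖h‖ + Q_λ² U_λ. -/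
open ContinuousLinearMap

open scoped Ring

/-!
Write `A = L + λ` and `B = T + λ`. The resolvent identity gives
`f_λ - f_{D,λ} = B⁻¹ ((T - L) f_λ - (S* v - ι* f*))`. Since `ι* ι ≤ A` we have
`‖ι x‖ ≤ ‖A^{1/2} x‖`, and the factorisation `A^{1/2} B⁻¹ = K* K A^{-1/2}` with
`K = B^{-1/2} A^{1/2}` produces the factor `Q² = ‖K* K‖`; the remaining vector
`A^{-1/2} ((T - L) f_λ - (S* v - ι* f*))` has norm at most `W ‖f_λ‖ + U`.
Finally `f_λ = ι* (𝓛 + λ)⁻¹ 𝓛^r h` and `‖ι* g‖ ≤ ‖𝓛^{1/2} g‖`, so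
`‖f_λ‖ ≤ sup_{x ≥ 0} x^{r + 1/2} / (x + λ) · ‖h‖ ≤ λ^{r - 1/2} ‖h‖`.
-/

lemma Real.rpow_div_add_le_rpow_sub_one {x c p : ℝ} (hx : 0 ≤ x) (hc : 0 < c)
    (hp₀ : 0 ≤ p) (hp₁ : p ≤ 1) : x ^ p / (x + c) ≤ c ^ (p - 1) := by
  have hxc : 0 < x + c := by positivity
  calc x ^ p / (x + c) ≤ (x + c) ^ p / (x + c) := by
        gcongr
        linarith
    _ = (x + c) ^ (p - 1) := by rw [Real.rpow_sub_one hxc.ne']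
    _ ≤ c ^ (p - 1) := Real.rpow_le_rpow_of_nonpos hc (by linarith) (by linarith)

section CStarAlgebra

variable {A : Type*} [CStarAlgebra A] [PartialOrder A] [StarOrderedRing A]

lemma isStrictlyPositive_ofReal_smul_one {c : ℝ} (hc : 0 < c) :
    IsStrictlyPositive ((c : ℂ) • (1 : A)) := by
  rw [Complex.coe_smul]
  exact .smul hc isStrictlyPositive_one

lemma IsStrictlyPositive.nonneg_add_ofReal_smul_one {a : A} (ha : 0 ≤ a) {c : ℝ} (hc : 0 < c) :
    IsStrictlyPositive (a + (c : ℂ) • 1) :=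
  .nonneg_add ha (isStrictlyPositive_ofReal_smul_one hc)

lemma CFC.rpow_half_mul_rpow_half {a : A} (ha : 0 ≤ a) :
    a ^ (1 / 2 : ℝ) * a ^ (1 / 2 : ℝ) = a := by
  rw [← CFC.sqrt_eq_rpow, CFC.sqrt_mul_sqrt_self a]

lemma cfc_add_const_inv {a : A} (ha : 0 ≤ a) {c : ℝ} (hc : 0 < c) :
    cfc (fun x : ℝ => (x + c)⁻¹) a = (a + (c : ℂ) • 1)⁻¹ʳ := by
  have hspec : ∀ x ∈ spectrum ℝ a, x + c ≠ 0 := fun x hx => by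
    have := spectrum_nonneg_of_nonneg ha hx
    positivity
  rw [cfc_inv (fun x => x + c) a hspec, cfc_add_const c (fun x => x) a, cfc_id' ℝ a,
    Algebra.algebraMap_eq_smul_one, Complex.coe_smul]

lemma CFC.rpow_half_mul_ringInverse {a b : A} (ha : IsStrictlyPositive a)
    (hb : IsStrictlyPositive b) :
    a ^ (1 / 2 : ℝ) * b⁻¹ʳ = star (b ^ (-(1 / 2) : ℝ) * a ^ (1 / 2 : ℝ)) *
      (b ^ (-(1 / 2) : ℝ) * a ^ (1 / 2 : ℝ)) * a ^ (-(1 / 2) : ℝ) := by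
  have hb_inv : b ^ (-(1 / 2) : ℝ) * b ^ (-(1 / 2) : ℝ) = b⁻¹ʳ := by
    rw [← CFC.rpow_add hb.isUnit, CFC.inverse_eq_rpow_neg_one]
    norm_num
  rw [star_mul, (CFC.rpow_nonneg).isSelfAdjoint.star_eq, (CFC.rpow_nonneg).isSelfAdjoint.star_eq]
  simp only [mul_assoc]
  rw [CFC.rpow_mul_rpow_neg _ ha, mul_one, hb_inv]

end CStarAlgebra

lemma ringInverse_apply_sub_ringInverse_apply {𝕜 M : Type*} [NontriviallyNormedField 𝕜]
    [NormedAddCommGroup M] [NormedSpace 𝕜 M] {a b : M →L[𝕜] M} (ha : IsUnit a) (hb : IsUnit b)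
    (y y' : M) :
    a⁻¹ʳ y - b⁻¹ʳ y' = b⁻¹ʳ ((b - a) (a⁻¹ʳ y) - (y' - y)) := by
  have hop : b⁻¹ʳ * (b - a) * a⁻¹ʳ = a⁻¹ʳ - b⁻¹ʳ := by
    rw [← neg_sub a b, mul_neg, neg_mul, ← Ring.inverse_sub_inverse (iff_of_true hb ha), neg_sub]
  have hres : b⁻¹ʳ ((b - a) (a⁻¹ʳ y)) = a⁻¹ʳ y - b⁻¹ʳ y := by
    rw [← sub_apply, ← hop]; rfl
  rw [map_sub, map_sub, hres]
  abel

section Hilbert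

variable {H E G : Type*}
  [NormedAddCommGroup H] [InnerProductSpace ℂ H] [CompleteSpace H]
  [NormedAddCommGroup E] [InnerProductSpace ℂ E] [CompleteSpace E]
  [NormedAddCommGroup G] [InnerProductSpace ℂ G] [CompleteSpace G]

lemma adjoint_comp_self_nonneg (f : H →L[ℂ] E) : 0 ≤ adjoint f ∘L f :=
  (nonneg_iff_isPositive _).mpr (isPositive_adjoint_comp_self f)

lemma self_comp_adjoint_nonneg (f : H →L[ℂ] E) : 0 ≤ f ∘L adjoint f :=
  (nonneg_iff_isPositive _).mpr (isPositive_self_comp_adjoint f)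

lemma opow_eq_rpow {a : H →L[ℂ] H} (ha : 0 ≤ a) (s : ℝ) : opow a s = a ^ s :=
  (CFC.rpow_eq_cfc_real ha).symm

lemma norm_apply_le_of_adjoint_comp_le {f : H →L[ℂ] E} {g : H →L[ℂ] G}
    (hfg : adjoint f ∘L f ≤ adjoint g ∘L g) (x : H) : ‖f x‖ ≤ ‖g x‖ := by
  have hsq : ‖f x‖ ^ 2 ≤ ‖g x‖ ^ 2 := by
    rw [apply_norm_sq_eq_inner_adjoint_left, apply_norm_sq_eq_inner_adjoint_left, ← sub_nonneg,
      ← map_sub, ← inner_sub_left]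
    exact hfg.re_inner_nonneg_left x
  exact (sq_le_sq₀ (norm_nonneg _) (norm_nonneg _)).mp hsq

lemma adjoint_comp_rpow_half {a : H →L[ℂ] H} (ha : 0 ≤ a) :
    adjoint (a ^ (1 / 2 : ℝ)) ∘L (a ^ (1 / 2 : ℝ)) = a := by
  rw [← star_eq_adjoint, (CFC.rpow_nonneg).isSelfAdjoint.star_eq]
  exact CFC.rpow_half_mul_rpow_half ha

lemma ringInverse_comp_adjoint (ι : H →L[ℂ] E) {c : ℝ} (hc : 0 < c) :
    (adjoint ι ∘L ι + (c : ℂ) • 1)⁻¹ʳ ∘L adjoint ι =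
      adjoint ι ∘L (ι ∘L adjoint ι + (c : ℂ) • 1)⁻¹ʳ := by
  set a := adjoint ι ∘L ι + (c : ℂ) • 1
  set b := ι ∘L adjoint ι + (c : ℂ) • 1
  have ha : IsUnit a :=
    (IsStrictlyPositive.nonneg_add_ofReal_smul_one (adjoint_comp_self_nonneg ι) hc).isUnit
  have hb : IsUnit b :=
    (IsStrictlyPositive.nonneg_add_ofReal_smul_one (self_comp_adjoint_nonneg ι) hc).isUnit
  have hab : a ∘L adjoint ι = adjoint ι ∘L b := by
    simp only [a, b, add_comp, comp_add, comp_smul, smul_comp, one_def, id_comp, comp_id,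
      comp_assoc]
  calc a⁻¹ʳ ∘L adjoint ι = a⁻¹ʳ ∘L adjoint ι ∘L (b ∘L b⁻¹ʳ) := by
        rw [← mul_def, Ring.mul_inverse_cancel b hb, one_def, comp_id]
    _ = (a⁻¹ʳ ∘L a) ∘L adjoint ι ∘L b⁻¹ʳ := by
        rw [comp_assoc, ← comp_assoc a, hab]
        simp only [comp_assoc]
    _ = adjoint ι ∘L b⁻¹ʳ := by rw [← mul_def, Ring.inverse_mul_cancel a ha, one_def, id_comp]

lemma norm_rpow_half_ringInverse_apply_le {a b : H →L[ℂ] H} (ha : IsStrictlyPositive a)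
    (hb : IsStrictlyPositive b) (z : H) :
    ‖(a ^ (1 / 2 : ℝ)) (b⁻¹ʳ z)‖ ≤
      ‖(b ^ (-(1 / 2) : ℝ)) ∘L (a ^ (1 / 2 : ℝ))‖ ^ 2 * ‖(a ^ (-(1 / 2) : ℝ)) z‖ := by
  set K := b ^ (-(1 / 2) : ℝ) * a ^ (1 / 2 : ℝ)
  calc ‖(a ^ (1 / 2 : ℝ)) (b⁻¹ʳ z)‖ = ‖(a ^ (1 / 2 : ℝ) * b⁻¹ʳ) z‖ := rfl
    _ = ‖(star K * K) ((a ^ (-(1 / 2) : ℝ)) z)‖ := by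
        rw [CFC.rpow_half_mul_ringInverse ha hb]; rfl
    _ ≤ ‖star K * K‖ * ‖(a ^ (-(1 / 2) : ℝ)) z‖ := le_opNorm _ _
    _ = ‖K‖ ^ 2 * ‖(a ^ (-(1 / 2) : ℝ)) z‖ := by rw [CStarRing.norm_star_mul_self, sq]

lemma norm_ringInverse_adjoint_opow_apply_le (ι : H →L[ℂ] E) {r c : ℝ} (hr₀ : 0 ≤ r)
    (hr₁ : r ≤ 1 / 2) (hc : 0 < c) (h : E) :
    ‖(adjoint ι ∘L ι + (c : ℂ) • 1)⁻¹ʳ (adjoint ι (opow (ι ∘L adjoint ι) r h))‖ ≤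
      c ^ (r - 1 / 2) * ‖h‖ := by
  set M := ι ∘L adjoint ι
  have hM : 0 ≤ M := self_comp_adjoint_nonneg ι
  have hspec : ∀ x ∈ spectrum ℝ M, 0 ≤ x := fun x hx => spectrum_nonneg_of_nonneg hM hx
  have hcont (s : ℝ) (hs : 0 ≤ s) : ContinuousOn (fun x : ℝ => x ^ s) (spectrum ℝ M) :=
    (Real.continuous_rpow_const hs).continuousOn
  have hcont_inv : ContinuousOn (fun x : ℝ => (x + c)⁻¹) (spectrum ℝ M) :=
    ContinuousOn.inv₀ (by fun_prop) fun x hx => by have := hspec x hx; positivity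
  set g : ℝ → ℝ := fun x => x ^ (1 / 2 : ℝ) * ((x + c)⁻¹ * x ^ r) with hg_def
  have hg : ‖cfc g M‖ ≤ c ^ (r - 1 / 2) := by
    refine norm_cfc_le (by positivity) fun x hx => ?_
    have hx := hspec x hx
    have hgx : g x = x ^ (r + 1 / 2) / (x + c) := by
      rw [Real.rpow_add' hx (by linarith)]
      simp only [g]
      ring
    rw [Real.norm_of_nonneg (by positivity), hgx]
    convert Real.rpow_div_add_le_rpow_sub_one (p := r + 1 / 2) hx hc (by linarith) (by linarith)
      using 2
    ring
  have hle :
      adjoint (adjoint ι) ∘L adjoint ι ≤ adjoint (M ^ (1 / 2 : ℝ)) ∘L (M ^ (1 / 2 : ℝ)) := by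
    rw [adjoint_comp_rpow_half hM, adjoint_adjoint]
  rw [← comp_apply, ringInverse_comp_adjoint ι hc, comp_apply]
  calc _ ≤ ‖(M ^ (1 / 2 : ℝ)) ((M + (c : ℂ) • 1)⁻¹ʳ (opow M r h))‖ :=
        norm_apply_le_of_adjoint_comp_le hle _
    _ = ‖cfc g M h‖ := by
        rw [CFC.rpow_eq_cfc_real hM, ← cfc_add_const_inv hM hc, opow, hg_def,
          cfc_mul (fun x : ℝ => x ^ (1 / 2 : ℝ)) (fun x => (x + c)⁻¹ * x ^ r) M
            (hcont _ (by norm_num)) (hcont_inv.mul (hcont r hr₀)),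
          cfc_mul (fun x : ℝ => (x + c)⁻¹) (fun x => x ^ r) M hcont_inv (hcont r hr₀)]
        rfl
    _ ≤ ‖cfc g M‖ * ‖h‖ := le_opNorm _ _
    _ ≤ c ^ (r - 1 / 2) * ‖h‖ := by gcongr

end Hilbert

theorem regularized_solutions_difference_bound_general
    {H : Type*} [NormedAddCommGroup H] [InnerProductSpace ℂ H] [CompleteSpace H]
    {E : Type*} [NormedAddCommGroup E] [InnerProductSpace ℂ E] [CompleteSpace E]
    {m : ℕ}
    (S : H →L[ℂ] EuclideanSpace ℂ (Fin m))
    (ι : H →L[ℂ] E)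
    (r : ℝ) (hr : 0 ≤ r) (hr' : r < 1 / 2)
    (h : E) (v : EuclideanSpace ℂ (Fin m)) (lam : ℝ) (hlam : 0 < lam) :
    letI T : H →L[ℂ] H := ContinuousLinearMap.adjoint S ∘L S
    letI L : H →L[ℂ] H := ContinuousLinearMap.adjoint ι ∘L ι
    letI bigL : E →L[ℂ] E := ι ∘L ContinuousLinearMap.adjoint ι
    letI fstar : E := (opow bigL r) h
    letI flam : H :=
      (Ring.inverse (L + (lam : ℂ) • (1 : H →L[ℂ] H)))
        ((ContinuousLinearMap.adjoint ι) fstar)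
    letI fDlam : H :=
      (Ring.inverse (T + (lam : ℂ) • (1 : H →L[ℂ] H)))
        ((ContinuousLinearMap.adjoint S) v)
    letI Q : ℝ := ‖opow (T + (lam : ℂ) • (1 : H →L[ℂ] H)) (-(1 / 2)) ∘L
        opow (L + (lam : ℂ) • (1 : H →L[ℂ] H)) (1 / 2)‖
    letI W : ℝ := ‖opow (L + (lam : ℂ) • (1 : H →L[ℂ] H)) (-(1 / 2)) ∘L (T - L)‖
    letI U : ℝ := ‖(opow (L + (lam : ℂ) • (1 : H →L[ℂ] H)) (-(1 / 2)))
        ((ContinuousLinearMap.adjoint S) v - (ContinuousLinearMap.adjoint ι) fstar)‖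
    ‖ι (flam - fDlam)‖ ≤
      lam ^ (r - 1 / 2) * Q ^ (2 : ℕ) * W * ‖h‖ + Q ^ (2 : ℕ) * U := by
  set L := adjoint ι ∘L ι
  set T := adjoint S ∘L S
  set A := L + (lam : ℂ) • (1 : H →L[ℂ] H)
  set B := T + (lam : ℂ) • (1 : H →L[ℂ] H)
  set fstar := opow (ι ∘L adjoint ι) r h
  set flam := A⁻¹ʳ (adjoint ι fstar)
  set w := adjoint S v - adjoint ι fstar
  have hA : IsStrictlyPositive A := .nonneg_add_ofReal_smul_one (adjoint_comp_self_nonneg ι) hlam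
  have hB : IsStrictlyPositive B := .nonneg_add_ofReal_smul_one (adjoint_comp_self_nonneg S) hlam
  have hdiff : flam - B⁻¹ʳ (adjoint S v) = B⁻¹ʳ ((T - L) flam - w) := by
    rw [ringInverse_apply_sub_ringInverse_apply hA.isUnit hB.isUnit, add_sub_add_right_eq_sub]
  have hι : adjoint ι ∘L ι ≤ adjoint (A ^ (1 / 2 : ℝ)) ∘L (A ^ (1 / 2 : ℝ)) := by
    rw [adjoint_comp_rpow_half hA.nonneg]
    exact le_add_of_nonneg_right (isStrictlyPositive_ofReal_smul_one hlam).nonneg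
  have hflam : ‖flam‖ ≤ lam ^ (r - 1 / 2) * ‖h‖ :=
    norm_ringInverse_adjoint_opow_apply_le ι hr hr'.le hlam h
  simp only [opow_eq_rpow hA.nonneg, opow_eq_rpow hB.nonneg]
  calc ‖ι (flam - B⁻¹ʳ (adjoint S v))‖ ≤ ‖(A ^ (1 / 2 : ℝ)) (B⁻¹ʳ ((T - L) flam - w))‖ := by
        rw [← hdiff]
        exact norm_apply_le_of_adjoint_comp_le hι _
    _ ≤ ‖(B ^ (-(1 / 2) : ℝ)) ∘L (A ^ (1 / 2 : ℝ))‖ ^ 2 *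
          ‖(A ^ (-(1 / 2) : ℝ)) ((T - L) flam - w)‖ :=
        norm_rpow_half_ringInverse_apply_le hA hB _
    _ ≤ ‖(B ^ (-(1 / 2) : ℝ)) ∘L (A ^ (1 / 2 : ℝ))‖ ^ 2 *
          (‖(A ^ (-(1 / 2) : ℝ)) ∘L (T - L)‖ * (lam ^ (r - 1 / 2) * ‖h‖) +
            ‖(A ^ (-(1 / 2) : ℝ)) w‖) := by
        gcongr
        rw [map_sub]
        refine (norm_sub_le _ _).trans (add_le_add_left ?_ _)
        exact (le_opNorm ((A ^ (-(1 / 2) : ℝ)) ∘L (T - L)) flam).trans (by gcongr)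
    _ = _ := by ring

/-- Let `0 ≤ r < 1/2`, `h ∈ 𝓔`, `f* := 𝓛^r h`, `v ∈ ℂ^m`, and define
`f_λ := (L + λI)⁻¹ ι* f*` and `f_{D,λ} := (T + λI)⁻¹ S* v` for `λ > 0`.  Then for
every `λ > 0`:  `‖ι (f_λ − f_{D,λ})‖ ≤ λ^{r−1/2} Q_λ² W_λ ‖h‖ + Q_λ² U_λ`, where
`T := S* S`, `L := ι* ι`, `𝓛 := ι ι*`, `Q_λ := ‖(T + λI)^{−1/2} (L + λI)^{1/2}‖`,
`W_λ := ‖(L + λI)^{−1/2} (T − L)‖` and `U_λ := ‖(L + λI)^{−1/2} (S* v − ι* f*)‖`. -/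
theorem regularized_solutions_difference_bound
    {H : Type*} [NormedAddCommGroup H] [InnerProductSpace ℂ H] [CompleteSpace H]
    {E : Type*} [NormedAddCommGroup E] [InnerProductSpace ℂ E] [CompleteSpace E]
    {m : ℕ} (hm : 0 < m)
    (S : H →L[ℂ] EuclideanSpace ℂ (Fin m))
    (hinv : IsUnit (S ∘L ContinuousLinearMap.adjoint S))
    (ι : H →L[ℂ] E)
    (r : ℝ) (hr : 0 ≤ r) (hr' : r < 1 / 2)
    (h : E) (v : EuclideanSpace ℂ (Fin m)) (lam : ℝ) (hlam : 0 < lam) :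
    letI T : H →L[ℂ] H := ContinuousLinearMap.adjoint S ∘L S
    letI L : H →L[ℂ] H := ContinuousLinearMap.adjoint ι ∘L ι
    letI bigL : E →L[ℂ] E := ι ∘L ContinuousLinearMap.adjoint ι
    letI fstar : E := (opow bigL r) h
    letI flam : H :=
      (Ring.inverse (L + (lam : ℂ) • (1 : H →L[ℂ] H)))
        ((ContinuousLinearMap.adjoint ι) fstar)
    letI fDlam : H :=
      (Ring.inverse (T + (lam : ℂ) • (1 : H →L[ℂ] H)))
        ((ContinuousLinearMap.adjoint S) v)
    letI Q : ℝ := ‖opow (T + (lam : ℂ) • (1 : H →L[ℂ] H)) (-(1 / 2)) ∘L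
        opow (L + (lam : ℂ) • (1 : H →L[ℂ] H)) (1 / 2)‖
    letI W : ℝ := ‖opow (L + (lam : ℂ) • (1 : H →L[ℂ] H)) (-(1 / 2)) ∘L (T - L)‖
    letI U : ℝ := ‖(opow (L + (lam : ℂ) • (1 : H →L[ℂ] H)) (-(1 / 2)))
        ((ContinuousLinearMap.adjoint S) v - (ContinuousLinearMap.adjoint ι) fstar)‖
    ‖ι (flam - fDlam)‖ ≤
      lam ^ (r - 1 / 2) * Q ^ (2 : ℕ) * W * ‖h‖ + Q ^ (2 : ℕ) * U :=
  regularized_solutions_difference_bound_general S ι r hr hr' h v lam hlam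
end

section
/- There exists an absolute constant C > 0 such that for every integer d ≥ 1, every real α > 0 and every λ with 0 < λ ≤ e^{−1}: ∫₀^∞ dt / (1 + λ e^{α t^{1/d}}) ≤ C · d! · α^{−d} · (log(1/λ))^d. -/
/-!
With `L = log (1/λ) ≥ 1`, the integrand `1 / (1 + e^{αu - L})` (`u = t^{1/d}`) is at most
`e · e^{-αu/L}`: for `αu ≤ L` both sides are compared with `1`, and beyond that the integrand
is at most `e^{L - αu}`. The majorant integrates to `e · d! · (L/α)^d` by the Gamma integral.
-/

open Real MeasureTheory Set

lemma one_div_one_add_exp_sub_le {L : ℝ} (hL : 1 ≤ L) (x : ℝ) :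
    1 / (1 + exp (x - L)) ≤ exp (1 - x / L) := by
  have hL0 : 0 < L := one_pos.trans_le hL
  rcases le_or_gt (x / L) 1 with hx | hx
  · calc 1 / (1 + exp (x - L)) ≤ 1 := by
          rw [div_le_one (by positivity)]; linarith [exp_pos (x - L)]
      _ ≤ exp (1 - x / L) := one_le_exp (by linarith)
  · have hxL : L - x ≤ 1 - x / L := by
      have hfactor : 1 - x / L - (L - x) = (L - 1) * (x / L - 1) := by field_simp; ring
      linarith [mul_nonneg (sub_nonneg.mpr hL) (sub_nonneg.mpr hx.le)]
    calc 1 / (1 + exp (x - L)) ≤ 1 / exp (x - L) :=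
          one_div_le_one_div_of_le (exp_pos _) (by linarith)
      _ = exp (L - x) := by rw [one_div, ← exp_neg, neg_sub]
      _ ≤ exp (1 - x / L) := exp_le_exp.mpr hxL

lemma integrableOn_exp_neg_mul_rpow {p b : ℝ} (hp : 0 < p) (hb : 0 < b) :
    IntegrableOn (fun x : ℝ => exp (-b * x ^ p)) (Ioi 0) := by
  simpa only [rpow_zero, one_mul] using
    integrableOn_rpow_mul_exp_neg_mul_rpow (s := 0) neg_one_lt_zero hp hb

lemma integral_exp_neg_mul_rpow_one_div_natCast {d : ℕ} (hd : d ≠ 0) {b : ℝ} (hb : 0 < b) :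
    ∫ x in Ioi (0 : ℝ), exp (-b * x ^ ((1 : ℝ) / d)) = d.factorial * (b ^ d)⁻¹ := by
  have hd_pos : (0 : ℝ) < d := by exact_mod_cast Nat.pos_of_ne_zero hd
  rw [integral_exp_neg_mul_rpow (one_div_pos.mpr hd_pos) hb, one_div_one_div, neg_div,
    div_div_cancel₀ one_ne_zero, rpow_neg hb.le, rpow_natCast, Gamma_nat_eq_factorial, mul_comm]

/-- There is an absolute constant `C > 0` such that for every integer
`d ≥ 1`, every real `α > 0` and every `0 < λ ≤ e⁻¹`:
`∫₀^∞ dt / (1 + λ e^{α t^{1/d}}) ≤ C · d! · α^{−d} · (log(1/λ))^d`, the integral being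
the Lebesgue integral over `t ∈ (0, ∞)`. -/
theorem integral_bound_exponential_decay :
    ∃ C : ℝ, 0 < C ∧ ∀ d : ℕ, 1 ≤ d → ∀ α : ℝ, 0 < α → ∀ lam : ℝ,
      0 < lam → lam ≤ (Real.exp 1)⁻¹ →
      (∫ t in Set.Ioi (0 : ℝ), 1 / (1 + lam * Real.exp (α * t ^ ((1 : ℝ) / d)))) ≤
        C * (Nat.factorial d : ℝ) * (α ^ d)⁻¹ * (Real.log (1 / lam)) ^ d := by
  refine ⟨exp 1, exp_pos 1, fun d hd α hα lam hlam hlam_le => ?_⟩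
  have hL_eq : log (1 / lam) = -log lam := by rw [one_div, log_inv]
  set L := log (1 / lam)
  have hL : 1 ≤ L := by
    rw [hL_eq, le_neg, ← log_exp (-1), exp_neg]
    exact log_le_log hlam hlam_le
  have hlam_eq : lam = exp (-L) := by rw [hL_eq, neg_neg, exp_log hlam]
  have hL0 : 0 < L := one_pos.trans_le hL
  have hbound : ∀ t : ℝ, 1 / (1 + lam * exp (α * t ^ ((1 : ℝ) / d))) ≤
      exp 1 * exp (-(α / L) * t ^ ((1 : ℝ) / d)) := fun t => by
    rw [← exp_add, hlam_eq, ← exp_add]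
    convert one_div_one_add_exp_sub_le hL (α * t ^ ((1 : ℝ) / d)) using 2 <;> ring_nf
  calc (∫ t in Ioi (0 : ℝ), 1 / (1 + lam * exp (α * t ^ ((1 : ℝ) / d))))
      ≤ ∫ t in Ioi (0 : ℝ), exp 1 * exp (-(α / L) * t ^ ((1 : ℝ) / d)) :=
        integral_mono_of_nonneg (.of_forall fun t => by positivity)
          ((integrableOn_exp_neg_mul_rpow (by positivity) (by positivity)).const_mul _)
          (.of_forall hbound)
    _ = exp 1 * d.factorial * (α ^ d)⁻¹ * L ^ d := by
        rw [integral_const_mul, integral_exp_neg_mul_rpow_one_div_natCast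
          (Nat.one_le_iff_ne_zero.mp hd) (div_pos hα hL0), div_pow]
        field_simp
end
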